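/- For 1 < k < n−1 and 1 ≤ m ≤ n−1, the inequality e_{k,n,m} > e_{k−1,n−1,m} holds, where e_{k,n,m} = (1/(n−1)!) Σ_{ℓ=0}^{k−1} W(ℓ,n,m+1) A(m,k−ℓ−1). -/

import Mathlib

noncomputable section

open Finset

/-- The weight of a linearly ordered block (given as a list): the number of its
elements smaller than its first element. -/
def blockWeight (b : List ℕ) : ℕ := (b.filter (fun x => x < b.headI)).length

/-- `P` is a partition of `{1,…,n}` into linearly ordered blocks (nonempty lists
of distinct elements, pairwise disjoint, whose union is `{1,…,n}`). -/
def IsOrderedPartition (n : ℕ) (P : Finset (List ℕ)) : Prop :=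
  (∀ b ∈ P, b ≠ [] ∧ b.Nodup) ∧
  (∀ b₁ ∈ P, ∀ b₂ ∈ P, b₁ ≠ b₂ → ∀ x, x ∈ b₁ → x ∉ b₂) ∧
  (∀ x : ℕ, (∃ b ∈ P, x ∈ b) ↔ x ∈ Finset.Icc 1 n)

/-- The weight of an ordered partition: the sum of the weights of its blocks. -/
def partitionWeight (P : Finset (List ℕ)) : ℕ := ∑ b ∈ P, blockWeight b

/-- The weighted Lah number `W(ℓ,n,m)`: the number of partitions of `{1,…,n}`
into exactly `m` linearly ordered blocks with total weight `ℓ`.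
(It vanishes for `ℓ < 0`.) -/
def weightedLah (ℓ : ℤ) (n m : ℕ) : ℕ :=
  Set.ncard {P : Finset (List ℕ) |
    IsOrderedPartition n P ∧ P.card = m ∧ (partitionWeight P : ℤ) = ℓ}

/-- The number of cycles of a permutation of `Fin n` (fixed points count as cycles). -/
def numCycles {n : ℕ} (σ : Equiv.Perm (Fin n)) : ℕ :=
  Multiset.card σ.cycleType + (n - σ.cycleType.sum)

/-- The unsigned Stirling number of the first kind: the number of permutations of
`n` elements with exactly `m` cycles. -/
def stirlingFirst (n m : ℕ) : ℕ :=
  Nat.card {σ : Equiv.Perm (Fin n) // numCycles σ = m}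

/-- The number of descents of a permutation of `Fin m`. -/
def descentCount (m : ℕ) (σ : Equiv.Perm (Fin m)) : ℕ :=
  ((Finset.range (m - 1)).filter (fun i =>
    ((List.ofFn (fun j => (σ j : ℕ))).getD (i + 1) 0) <
      ((List.ofFn (fun j => (σ j : ℕ))).getD i 0))).card

/-- The Eulerian number `A(m,j)`: permutations of `{1,…,m}` with exactly `j` descents. -/
def eulerian (m j : ℕ) : ℕ :=
  Nat.card {σ : Equiv.Perm (Fin m) // descentCount m σ = j}

/-- The coefficient `e_{k,n,m}` of the Ehrhart polynomial of the hypersimplex. -/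
def eCoef (k n m : ℕ) : ℚ :=
  (1 / (n - 1).factorial : ℚ) *
    ∑ ℓ ∈ Finset.range k, (weightedLah ℓ n (m + 1) : ℚ) * (eulerian m (k - ℓ - 1) : ℚ)

/-- Number of lattice points of the `t`-th dilate of the hypersimplex `Δ_{k,n}`,
i.e. points of `{0,…,t}^n` with coordinate sum `k·t`. -/
def hyperCount (k n t : ℕ) : ℕ :=
  Nat.card {x : Fin n → ℤ // (∀ i, 0 ≤ x i ∧ x i ≤ (t : ℤ)) ∧ ∑ i, x i = (k : ℤ) * t}

/-- Number of lattice points of the `t`-th dilate of the half-open hypersimplex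
`Δ'_{k,n} ⊆ ℝ^{n-1}` (for `k > 1`). -/
def halfOpenCount (k n t : ℕ) : ℕ :=
  Nat.card {x : Fin (n - 1) → ℤ // (∀ i, 0 ≤ x i ∧ x i ≤ (t : ℤ)) ∧
    ((k : ℤ) - 1) * t < ∑ i, x i ∧ ∑ i, x i ≤ (k : ℤ) * t}

/-- Number of lattice points of the `t`-th dilate of the independence polytope of
`U_{k,n}`, i.e. points of `{0,…,t}^n` with coordinate sum at most `k·t`. -/
def indepCount (k n t : ℕ) : ℕ :=
  Nat.card {x : Fin n → ℤ // (∀ i, 0 ≤ x i ∧ x i ≤ (t : ℤ)) ∧ ∑ i, x i ≤ (k : ℤ) * t}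

/-- Number of lattice points of a region `S ⊆ ℝ^d`. -/
def latticeCount {d : ℕ} (S : Set (Fin d → ℝ)) : ℕ :=
  Nat.card {x : Fin d → ℤ // (fun i => (x i : ℝ)) ∈ S}

/-!
Clearing denominators, the claim is `(n-1) N(k-1, n-1) < N(k, n)` for the numerators
`N(k, n) = ∑ ℓ, W(ℓ, n, m+1) A(m, k-ℓ-1)`, and it follows termwise from
`(n-1) W(ℓ-1, n-1, m+1) ≤ W(ℓ, n, m+1)`. The latter is an injection: given `i ∈ {1,…,n-1}` and
an ordered partition of `{1,…,n-1}` of weight `ℓ-1`, shift every entry up by one and insert `1`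
right after `i+1`. Only the block receiving `1` gains weight, by exactly one, and deleting `1`
recovers both the partition and `i`. No block of an image starts with `1`, so a partition
containing the block `[1]` makes the inequality strict; for a suitable `ℓ` such a partition
exists and `A(m, k-ℓ-1) > 0`.
-/

def shiftInsert (i : ℕ) (b : List ℕ) : List ℕ :=
  b.flatMap fun x => if x = i then [i + 1, 1] else [x + 1]

lemma List.headI_mem {α : Type*} [Inhabited α] {l : List α} (h : l ≠ []) : l.headI ∈ l := by
  obtain ⟨x, t, rfl⟩ := List.exists_cons_of_ne_nil h
  exact List.mem_cons_self

section shiftInsert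

variable {i : ℕ} {b : List ℕ}

@[simp]
lemma shiftInsert_nil (i : ℕ) : shiftInsert i [] = [] := rfl

@[simp]
lemma shiftInsert_cons (i x : ℕ) (t : List ℕ) :
    shiftInsert i (x :: t) = (if x = i then [i + 1, 1] else [x + 1]) ++ shiftInsert i t := by
  simp [shiftInsert]

lemma shiftInsert_of_notMem (h : i ∉ b) : shiftInsert i b = b.map (· + 1) := by
  induction b with
  | nil => rfl
  | cons x t ih =>
    simp only [List.mem_cons, not_or] at h
    simp [Ne.symm h.1, ih h.2]

lemma mem_shiftInsert {y : ℕ} :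
    y ∈ shiftInsert i b ↔ (y = 1 ∧ i ∈ b) ∨ ∃ x ∈ b, y = x + 1 := by
  induction b with
  | nil => simp
  | cons x t ih =>
    simp only [shiftInsert_cons, List.mem_append, ih, List.mem_cons]
    split_ifs with h <;> simp [h] <;> aesop

lemma headI_shiftInsert (hb : b ≠ []) : (shiftInsert i b).headI = b.headI + 1 := by
  obtain ⟨x, t, rfl⟩ := List.exists_cons_of_ne_nil hb
  by_cases h : x = i <;> simp [h]

lemma shiftInsert_ne_nil (hb : b ≠ []) : shiftInsert i b ≠ [] := by
  obtain ⟨x, t, rfl⟩ := List.exists_cons_of_ne_nil hb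
  by_cases h : x = i <;> simp [h]

lemma erase_one_shiftInsert (hb : b.Nodup) (h0 : 0 ∉ b) :
    (shiftInsert i b).erase 1 = b.map (· + 1) := by
  induction b with
  | nil => rfl
  | cons x t ih =>
    simp only [List.nodup_cons, List.mem_cons, not_or] at hb h0
    by_cases h : x = i
    · subst h
      simp [List.erase_cons_tail, Ne.symm h0.1, shiftInsert_of_notMem hb.1]
    · simp [h, List.erase_cons_tail, Ne.symm h0.1, ih hb.2 h0.2]

lemma map_pred_erase_one_shiftInsert (hb : b.Nodup) (h0 : 0 ∉ b) :
    ((shiftInsert i b).erase 1).map (· - 1) = b := by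
  simp [erase_one_shiftInsert hb h0, Function.comp_def]

lemma nodup_shiftInsert (hb : b.Nodup) (h0 : 0 ∉ b) : (shiftInsert i b).Nodup := by
  have hmap : (b.map (· + 1)).Nodup := hb.map fun _ _ => Nat.succ.inj
  by_cases hi : i ∈ b
  · have h1 : 1 ∈ shiftInsert i b := mem_shiftInsert.2 (Or.inl ⟨rfl, hi⟩)
    refine (List.perm_cons_erase h1).nodup_iff.2 ?_
    rw [erase_one_shiftInsert hb h0]
    exact List.nodup_cons.2 ⟨by simpa using h0, hmap⟩
  · rwa [shiftInsert_of_notMem hi]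

lemma length_filter_lt_shiftInsert (hb : b.Nodup) {a : ℕ} (ha : a ≠ 0) :
    ((shiftInsert i b).filter (· < a + 1)).length
      = (b.filter (· < a)).length + if i ∈ b then 1 else 0 := by
  induction b with
  | nil => simp
  | cons x t ih =>
    simp only [List.nodup_cons] at hb
    simp only [shiftInsert_cons, List.filter_append, List.length_append, ih hb.2,
      List.filter_cons, List.mem_cons]
    by_cases hx : x = i
    · have h1 : 1 ≤ a := Nat.one_le_iff_ne_zero.2 ha
      subst hx; split_ifs <;> simp_all <;> omega
    · split_ifs <;> simp_all <;> omega

lemma blockWeight_shiftInsert (hb : b ≠ []) (hnd : b.Nodup) (h0 : 0 ∉ b) :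
    blockWeight (shiftInsert i b) = blockWeight b + if i ∈ b then 1 else 0 := by
  have hh : b.headI ≠ 0 := fun h => h0 (h ▸ List.headI_mem hb)
  rw [blockWeight, headI_shiftInsert hb, length_filter_lt_shiftInsert hnd hh, blockWeight]

lemma eq_of_shiftInsert_eq_shiftInsert (hb : b.Nodup) (h0 : 0 ∉ b) {i' : ℕ} (hi : i ∈ b)
    (hi' : i' ∈ b) (h : shiftInsert i b = shiftInsert i' b) : i = i' := by
  induction b with
  | nil => simp at hi
  | cons x t ih =>
    simp only [List.nodup_cons, List.mem_cons, not_or] at hb h0 hi hi'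
    -- if exactly one of `i, i'` is the head `x`, the other tail would start with `1`
    have mixed : ∀ j ∈ t, x ∉ t → 1 :: t.map (· + 1) ≠ shiftInsert j t := fun j hj hx heq => by
      have ht : t ≠ [] := List.ne_nil_of_mem hj
      have := congrArg List.headI heq
      rw [headI_shiftInsert ht, List.headI_cons] at this
      exact h0.2 (show t.headI = 0 by omega ▸ List.headI_mem ht)
    by_cases hx : x = i <;> by_cases hx' : x = i'
    · exact hx ▸ hx'
    · subst hx
      simp [hx', shiftInsert_of_notMem hb.1] at h
      exact absurd h (mixed i' (hi'.resolve_left (Ne.symm hx')) hb.1)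
    · subst hx'
      simp [hx, shiftInsert_of_notMem hb.1] at h
      exact absurd h.symm (mixed i (hi.resolve_left (Ne.symm hx)) hb.1)
    · simp only [shiftInsert_cons, hx, hx', if_false, List.singleton_append, List.cons.injEq] at h
      exact ih hb.2 h0.2 (hi.resolve_left (Ne.symm hx)) (hi'.resolve_left (Ne.symm hx')) h.2

end shiftInsert

namespace IsOrderedPartition

variable {n i : ℕ} {P : Finset (List ℕ)} {b : List ℕ}

lemma ne_nil (hP : IsOrderedPartition n P) (hb : b ∈ P) : b ≠ [] := (hP.1 b hb).1

lemma nodup (hP : IsOrderedPartition n P) (hb : b ∈ P) : b.Nodup := (hP.1 b hb).2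

lemma mem_Icc (hP : IsOrderedPartition n P) (hb : b ∈ P) {x : ℕ} (hx : x ∈ b) :
    x ∈ Icc 1 n :=
  (hP.2.2 x).1 ⟨b, hb, hx⟩

lemma zero_notMem (hP : IsOrderedPartition n P) (hb : b ∈ P) : 0 ∉ b := fun h =>
  by simpa using hP.mem_Icc hb h

lemma exists_mem (hP : IsOrderedPartition n P) {x : ℕ} (hx : x ∈ Icc 1 n) : ∃ b ∈ P, x ∈ b :=
  (hP.2.2 x).2 hx

lemma eq_of_mem (hP : IsOrderedPartition n P) {b' : List ℕ} (hb : b ∈ P) (hb' : b' ∈ P)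
    {x : ℕ} (hx : x ∈ b) (hx' : x ∈ b') : b = b' := by
  by_contra h
  exact hP.2.1 b hb b' hb' h x hx hx'

lemma map_pred_erase_one_shiftInsert (hP : IsOrderedPartition n P) (hb : b ∈ P) :
    ((shiftInsert i b).erase 1).map (· - 1) = b :=
  _root_.map_pred_erase_one_shiftInsert (hP.nodup hb) (hP.zero_notMem hb)

lemma injOn_shiftInsert (hP : IsOrderedPartition n P) : Set.InjOn (shiftInsert i) P :=
  fun b hb b' hb' h => by
    rw [← hP.map_pred_erase_one_shiftInsert hb, h, hP.map_pred_erase_one_shiftInsert hb']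

lemma image_shiftInsert (hP : IsOrderedPartition n P) (hi : i ∈ Icc 1 n) :
    IsOrderedPartition (n + 1) (P.image (shiftInsert i)) := by
  refine ⟨?_, ?_, fun x => ⟨?_, fun hx => ?_⟩⟩
  · simp only [mem_image, forall_exists_index, and_imp, forall_apply_eq_imp_iff₂]
    exact fun b hb => ⟨shiftInsert_ne_nil (hP.ne_nil hb),
      nodup_shiftInsert (hP.nodup hb) (hP.zero_notMem hb)⟩
  · simp only [mem_image, forall_exists_index, and_imp, forall_apply_eq_imp_iff₂]
    intro b₁ hb₁ b₂ hb₂ hne x hx₁ hx₂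
    have hb : b₁ ≠ b₂ := fun h => hne (h ▸ rfl)
    rcases mem_shiftInsert.1 hx₁ with ⟨rfl, hi₁⟩ | ⟨z₁, hz₁, rfl⟩ <;>
      rcases mem_shiftInsert.1 hx₂ with ⟨hx, hi₂⟩ | ⟨z₂, hz₂, hz⟩
    · exact hb (hP.eq_of_mem hb₁ hb₂ hi₁ hi₂)
    · exact hP.zero_notMem hb₂ ((show z₂ = 0 by omega) ▸ hz₂)
    · exact hP.zero_notMem hb₁ ((show z₁ = 0 by omega) ▸ hz₁)
    · exact hb (hP.eq_of_mem hb₁ hb₂ hz₁ ((show z₂ = z₁ by omega) ▸ hz₂))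
  · rintro ⟨c, hc, hx⟩
    obtain ⟨b, hb, rfl⟩ := mem_image.1 hc
    rcases mem_shiftInsert.1 hx with ⟨rfl, -⟩ | ⟨z, hz, rfl⟩
    · simp
    · have := Finset.mem_Icc.1 (hP.mem_Icc hb hz)
      simp only [Finset.mem_Icc]
      omega
  · simp only [mem_image, exists_exists_and_eq_and, mem_shiftInsert]
    obtain rfl | hx1 := eq_or_ne x 1
    · obtain ⟨b, hb, hib⟩ := hP.exists_mem hi
      exact ⟨b, hb, Or.inl ⟨rfl, hib⟩⟩
    · have := Finset.mem_Icc.1 hx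
      obtain ⟨b, hb, hxb⟩ := hP.exists_mem (x := x - 1) (Finset.mem_Icc.2 (by omega))
      exact ⟨b, hb, Or.inr ⟨x - 1, hxb, by omega⟩⟩

lemma partitionWeight_image_shiftInsert (hP : IsOrderedPartition n P) (hi : i ∈ Icc 1 n) :
    partitionWeight (P.image (shiftInsert i)) = partitionWeight P + 1 := by
  obtain ⟨b₀, hb₀, hib₀⟩ := hP.exists_mem hi
  have hblock : P.filter (i ∈ ·) = {b₀} := by
    refine eq_singleton_iff_unique_mem.2 ⟨mem_filter.2 ⟨hb₀, hib₀⟩, fun b hb => ?_⟩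
    rw [mem_filter] at hb
    exact hP.eq_of_mem hb.1 hb₀ hb.2 hib₀
  rw [partitionWeight, sum_image hP.injOn_shiftInsert, partitionWeight,
    sum_congr rfl fun b hb => blockWeight_shiftInsert (hP.ne_nil hb) (hP.nodup hb)
      (hP.zero_notMem hb), sum_add_distrib, sum_boole, hblock, card_singleton, Nat.cast_one]

lemma image_shiftInsert_injective (hP : IsOrderedPartition n P) {i' : ℕ} {P' : Finset (List ℕ)}
    (hP' : IsOrderedPartition n P') (hi : i ∈ Icc 1 n)
    (h : P.image (shiftInsert i) = P'.image (shiftInsert i')) : i = i' ∧ P = P' := by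
  have recover : ∀ {j Q}, IsOrderedPartition n Q →
      (Q.image (shiftInsert j)).image (fun c => (c.erase 1).map (· - 1)) = Q := fun hQ => by
    rw [image_image]
    exact (image_congr fun b hb => hQ.map_pred_erase_one_shiftInsert hb).trans image_id
  obtain rfl : P = P' := by rw [← recover hP, h, recover hP']
  obtain ⟨b, hb, hib⟩ := hP.exists_mem hi
  obtain ⟨b', hb', hbb'⟩ := mem_image.1 (h ▸ mem_image_of_mem (shiftInsert i) hb)
  have h1 : 1 ∈ shiftInsert i' b' := hbb' ▸ mem_shiftInsert.2 (Or.inl ⟨rfl, hib⟩)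
  have hi'b' : i' ∈ b' := by
    rcases mem_shiftInsert.1 h1 with ⟨-, h⟩ | ⟨z, hz, hz1⟩
    · exact h
    · exact absurd ((show z = 0 by omega) ▸ hz) (hP.zero_notMem hb')
  obtain rfl : b' = b := by
    rw [← hP.map_pred_erase_one_shiftInsert hb' (i := i'), hbb',
      hP.map_pred_erase_one_shiftInsert hb]
  exact ⟨eq_of_shiftInsert_eq_shiftInsert (hP.nodup hb) (hP.zero_notMem hb) hib hi'b' hbb'.symm,
    rfl⟩

end IsOrderedPartition

lemma finite_setOf_nodup_forall_mem {α : Type*} [DecidableEq α] (s : Finset α) :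
    {b : List α | b.Nodup ∧ ∀ x ∈ b, x ∈ s}.Finite := by
  refine (s.toList.sublists.flatMap List.permutations).finite_toSet.subset ?_
  rintro b ⟨hb, hbs⟩
  obtain ⟨l, hlb, hls⟩ := hb.subperm fun x hx => mem_toList.2 (hbs x hx)
  simp only [List.mem_flatMap, List.mem_sublists, List.mem_permutations]
  exact ⟨l, hls, hlb.symm⟩

lemma IsOrderedPartition.finite (n : ℕ) : {P | IsOrderedPartition n P}.Finite := by
  refine ((finite_setOf_nodup_forall_mem (Icc 1 n)).finite_subsets.preimage
    coe_injective.injOn).subset fun P hP b hb => ?_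
  exact ⟨hP.nodup hb, fun x => hP.mem_Icc hb⟩

def weightedLahSet (ℓ : ℤ) (n m : ℕ) : Set (Finset (List ℕ)) :=
  {P | IsOrderedPartition n P ∧ P.card = m ∧ (partitionWeight P : ℤ) = ℓ}

lemma weightedLah_eq_ncard (ℓ : ℤ) (n m : ℕ) : weightedLah ℓ n m = (weightedLahSet ℓ n m).ncard :=
  rfl

lemma weightedLahSet_finite (ℓ : ℤ) (n m : ℕ) : (weightedLahSet ℓ n m).Finite :=
  (IsOrderedPartition.finite n).subset fun _ hP => hP.1

lemma weightedLah_of_neg {ℓ : ℤ} (hℓ : ℓ < 0) (n m : ℕ) : weightedLah ℓ n m = 0 := by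
  rw [weightedLah_eq_ncard, Set.ncard_eq_zero (weightedLahSet_finite ℓ n m)]
  exact Set.eq_empty_of_forall_notMem fun P ⟨_, _, hw⟩ => by omega

def shiftInsertImage (ℓ : ℤ) (n m : ℕ) : Set (Finset (List ℕ)) :=
  (fun p : ℕ × Finset (List ℕ) => p.2.image (shiftInsert p.1)) ''
    ((Icc 1 n : Set ℕ) ×ˢ weightedLahSet ℓ n m)

lemma ncard_shiftInsertImage (ℓ : ℤ) (n m : ℕ) :
    (shiftInsertImage ℓ n m).ncard = n * weightedLah ℓ n m := by
  rw [shiftInsertImage, Set.InjOn.ncard_image, Set.ncard_prod, Set.ncard_coe_finset,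
    Nat.card_Icc, Nat.add_sub_cancel, weightedLah_eq_ncard]
  rintro ⟨i, P⟩ ⟨hi, hP, -⟩ ⟨i', P'⟩ ⟨-, hP', -⟩ h
  obtain ⟨rfl, rfl⟩ := hP.image_shiftInsert_injective hP' hi h
  rfl

lemma shiftInsertImage_subset (ℓ : ℤ) (n m : ℕ) :
    shiftInsertImage ℓ n m ⊆ weightedLahSet (ℓ + 1) (n + 1) m := by
  rintro _ ⟨⟨i, P⟩, ⟨hi, hP, hcard, hw⟩, rfl⟩
  refine ⟨hP.image_shiftInsert hi, ?_, ?_⟩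
  · rw [card_image_of_injOn hP.injOn_shiftInsert, hcard]
  · rw [hP.partitionWeight_image_shiftInsert hi, Nat.cast_succ, hw]

lemma headI_ne_one_of_mem_shiftInsertImage {ℓ : ℤ} {n m : ℕ} {Q : Finset (List ℕ)}
    (hQ : Q ∈ shiftInsertImage ℓ n m) {c : List ℕ} (hc : c ∈ Q) : c.headI ≠ 1 := by
  obtain ⟨⟨i, P⟩, ⟨-, hP, -⟩, rfl⟩ := hQ
  obtain ⟨b, hb, rfl⟩ := mem_image.1 hc
  rw [headI_shiftInsert (hP.ne_nil hb)]
  exact fun h => hP.zero_notMem hb (Nat.succ.inj h ▸ List.headI_mem (hP.ne_nil hb))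

lemma mul_weightedLah_le (ℓ : ℤ) (n m : ℕ) :
    n * weightedLah (ℓ - 1) n m ≤ weightedLah ℓ (n + 1) m := by
  rw [← ncard_shiftInsertImage, weightedLah_eq_ncard]
  simpa using Set.ncard_le_ncard (shiftInsertImage_subset (ℓ - 1) n m)
    (weightedLahSet_finite _ _ _)

lemma exists_singleton_one_mem_weightedLahSet {ℓ n m : ℕ} (hm : 2 ≤ m) (h : ℓ + m ≤ n) :
    ∃ Q ∈ weightedLahSet ℓ n m, [1] ∈ Q := by
  set B := List.range' (m + ℓ) (n + 1 - m - ℓ) ++ List.range' m ℓ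
  have hmemB : ∀ x, x ∈ B ↔ m ≤ x ∧ x ≤ n := by
    intro x; simp only [B, List.mem_append, List.mem_range'_1]; omega
  have hB : B ∉ (Icc 1 (m - 1)).image fun j => [j] := by
    simp only [mem_image, mem_Icc, not_exists, not_and]
    intro j hj hjB
    have := (hmemB m).2 (by omega)
    simp [← hjB] at this
    omega
  have hwB : blockWeight B = ℓ := by
    obtain ⟨r, hr⟩ : ∃ r, n + 1 - m - ℓ = r + 1 := ⟨n - m - ℓ, by omega⟩
    simp only [blockWeight, B, hr, List.range'_succ, List.cons_append, List.headI_cons]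
    rw [List.filter_cons_of_neg (by simp), List.filter_append,
      List.filter_eq_nil_iff.2 (by simp [List.mem_range'_1]; omega),
      List.filter_eq_self.2 (by simp [List.mem_range'_1])]
    simp
  refine ⟨insert B ((Icc 1 (m - 1)).image fun j => [j]), ⟨⟨?_, ?_, fun x => ?_⟩, ?_, ?_⟩, ?_⟩
  · simp only [mem_insert, mem_image, forall_eq_or_imp, forall_exists_index, and_imp,
      forall_apply_eq_imp_iff₂]
    refine ⟨⟨List.ne_nil_of_mem ((hmemB m).2 (by omega)), ?_⟩, fun _ _ => by simp⟩
    exact List.Nodup.append List.nodup_range' List.nodup_range'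
      (by simp [List.disjoint_iff_ne, List.mem_range'_1]; omega)
  · simp only [mem_insert, mem_image, mem_Icc]
    rintro _ (rfl | ⟨j, hj, rfl⟩) _ (rfl | ⟨j', hj', rfl⟩) hne x hx hx'
    · exact hne rfl
    · rw [List.mem_singleton.1 hx'] at hx
      have := (hmemB j').1 hx
      omega
    · rw [List.mem_singleton.1 hx] at hx'
      have := (hmemB j).1 hx'
      omega
    · rw [List.mem_singleton.1 hx] at hx'
      exact hne (by rw [List.mem_singleton.1 hx'])
  · simp only [mem_insert, mem_image, mem_Icc, exists_eq_or_imp, hmemB, ↓existsAndEq, and_true,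
      List.mem_cons, List.not_mem_nil, or_false, exists_eq_right']
    omega
  · rw [card_insert_of_notMem hB, card_image_of_injective _ List.singleton_injective, Nat.card_Icc]
    omega
  · rw [partitionWeight, sum_insert hB, sum_image fun _ _ _ _ => List.singleton_inj.1, hwB]
    simp [blockWeight]
  · simp only [mem_insert, mem_image, mem_Icc, List.cons.injEq, and_true, exists_eq_right]
    omega

lemma mul_weightedLah_lt {ℓ n m : ℕ} (hm : 2 ≤ m) (h : ℓ + m ≤ n + 1) :
    n * weightedLah (ℓ - 1) n m < weightedLah ℓ (n + 1) m := by
  obtain ⟨Q, hQ, h1⟩ := exists_singleton_one_mem_weightedLahSet hm h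
  rw [← ncard_shiftInsertImage, weightedLah_eq_ncard]
  have hsub := shiftInsertImage_subset (ℓ - 1) n m
  rw [sub_add_cancel] at hsub
  refine Set.ncard_lt_ncard ((Set.ssubset_iff_of_subset hsub).2 ⟨Q, hQ, fun hQ' => ?_⟩)
    (weightedLahSet_finite _ _ _)
  exact headI_ne_one_of_mem_shiftInsertImage hQ' h1 rfl

lemma List.getD_ofFn {α : Type*} {m : ℕ} (f : Fin m → α) (d : α) {i : ℕ} (h : i < m) :
    (List.ofFn f).getD i d = f ⟨i, h⟩ := by
  simp [h]

def prefixReverse (m j : ℕ) (hj : j < m) : Equiv.Perm (Fin m) :=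
  Function.Involutive.toPerm (fun x => ⟨if (x : ℕ) ≤ j then j - x else x, by split <;> omega⟩)
    fun x => by ext; dsimp only; split_ifs <;> omega

lemma prefixReverse_apply {m j : ℕ} (hj : j < m) (x : Fin m) :
    (prefixReverse m j hj x : ℕ) = if (x : ℕ) ≤ j then j - x else x :=
  rfl

lemma descentCount_prefixReverse {m j : ℕ} (hj : j < m) :
    descentCount m (prefixReverse m j hj) = j := by
  rw [descentCount]
  convert card_range j using 2
  ext i
  simp only [mem_filter, mem_range]
  constructor
  · rintro ⟨hi, hlt⟩
    rw [List.getD_ofFn _ _ (by omega), List.getD_ofFn _ _ (by omega), prefixReverse_apply,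
      prefixReverse_apply] at hlt
    dsimp only at hlt
    split_ifs at hlt <;> omega
  · intro hi
    refine ⟨by omega, ?_⟩
    rw [List.getD_ofFn _ _ (by omega), List.getD_ofFn _ _ (by omega), prefixReverse_apply,
      prefixReverse_apply]
    dsimp only
    split_ifs <;> omega

lemma eulerian_pos {m j : ℕ} (hj : j < m) : 0 < eulerian m j :=
  have : Nonempty {σ : Equiv.Perm (Fin m) // descentCount m σ = j} :=
    ⟨⟨prefixReverse m j hj, descentCount_prefixReverse hj⟩⟩
  Nat.card_pos

def ehrhartNumerator (k n m : ℕ) : ℕ :=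
  ∑ ℓ ∈ range k, weightedLah ℓ n (m + 1) * eulerian m (k - ℓ - 1)

lemma eCoef_eq (k n m : ℕ) : eCoef k n m = ehrhartNumerator k n m / (n - 1).factorial := by
  rw [eCoef, ehrhartNumerator]
  push_cast
  ring

lemma mul_ehrhartNumerator_lt {k n m : ℕ} (hm : 1 ≤ m) (hmn : m ≤ n) (hkn : k < n) :
    n * ehrhartNumerator k n m < ehrhartNumerator (k + 1) (n + 1) m := by
  have hshift : n * ehrhartNumerator k n m =
      ∑ ℓ ∈ range (k + 1), n * weightedLah ((ℓ : ℤ) - 1) n (m + 1) * eulerian m (k - ℓ) := by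
    rw [sum_range_succ', ehrhartNumerator, mul_sum]
    simp [weightedLah_of_neg, mul_assoc, Nat.sub_sub]
  have hnum : ehrhartNumerator (k + 1) (n + 1) m =
      ∑ ℓ ∈ range (k + 1), weightedLah ℓ (n + 1) (m + 1) * eulerian m (k - ℓ) := by
    simp [ehrhartNumerator, Nat.sub_sub]
  rw [hshift, hnum]
  refine sum_lt_sum (fun ℓ _ => Nat.mul_le_mul_right _ (mul_weightedLah_le _ _ _)) ?_
  -- the index where a weight-`ℓ` partition with a block `[1]` exists and `A(m, k - ℓ) > 0`
  refine ⟨k + 1 - min (k + 1) m, mem_range.2 (by omega), ?_⟩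
  exact Nat.mul_lt_mul_of_lt_of_le (mul_weightedLah_lt (by omega) (by omega)) le_rfl
    (eulerian_pos (by omega))

theorem eCoef_gt (k n m : ℕ) (hk : 1 < k) (hkn : k < n - 1)
    (hm : 1 ≤ m) (hmn : m ≤ n - 1) :
    eCoef (k - 1) (n - 1) m < eCoef k n m := by
  obtain ⟨k, rfl⟩ : ∃ k', k = k' + 1 := ⟨k - 1, by omega⟩
  obtain ⟨n, rfl⟩ : ∃ n', n = n' + 2 := ⟨n - 2, by omega⟩
  have key := mul_ehrhartNumerator_lt (k := k) (n := n + 1) hm (by omega) (by omega)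
  simp only [Nat.add_sub_cancel, show n + 2 - 1 = n + 1 by omega, eCoef_eq,
    Nat.factorial_succ]
  rw [div_lt_div_iff₀ (by positivity) (by positivity), Nat.cast_mul, mul_left_comm, ← mul_assoc]
  exact mul_lt_mul_of_pos_right (by exact_mod_cast key) (by positivity)
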